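/- With B_n(q) defined by B₀(q)=1 and B_n(q)=∑_{k=0}^{n−1}[n−1 choose k]_q B_k(q), every coefficient of q^j in B_n(q) for 0 ≤ j ≤ deg B_n(q) is strictly positive; in particular, the number of nonzero coefficients of B_n(q) equals g(n)+1. -/

import Mathlib

/-- The Gaussian binomial coefficient `[n choose k]_q` as a polynomial,
defined via the `q`-Pascal recursion
`[n+1 choose k+1]_q = [n choose k]_q + q^(k+1) [n choose k+1]_q`. -/
noncomputable def gaussBinom : ℕ → ℕ → Polynomial ℤ
  | _, 0 => 1
  | 0, _ + 1 => 0
  | n + 1, k + 1 => gaussBinom n k + Polynomial.X ^ (k + 1) * gaussBinom n (k + 1)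
termination_by n k => (n, k)

/-- Johnson's `q`-Bell polynomials: `B₀(q) = 1` and
`B_n(q) = ∑_{k=0}^{n-1} [n-1 choose k]_q B_k(q)`. -/
noncomputable def qBell : ℕ → Polynomial ℤ
  | 0 => 1
  | n + 1 => ∑ k ∈ (Finset.range (n + 1)).attach, gaussBinom n k.1 * qBell k.1
decreasing_by
  have := Finset.mem_range.mp k.2; omega
/-- `g 0 = 0` and `g n = max_{1 ≤ k ≤ n} ((k-1)(n-k) + g (n-k))`
(below, `k = j + 1` with `j` ranging over `0, …, n-1`). -/
def g : ℕ → ℕ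
  | 0 => 0
  | n + 1 => (Finset.range (n + 1)).sup (fun j => j * (n - j) + g (n - j))
decreasing_by
  omega

open Polynomial

def DensePos (p : Polynomial ℤ) : Prop := ∀ j ≤ p.natDegree, 0 < p.coeff j

lemma DensePos.ne_zero {p : Polynomial ℤ} (hp : DensePos p) : p ≠ 0 := by
  intro h
  have := hp 0 (Nat.zero_le _)
  simp [h] at this

lemma DensePos.coeff_nonneg {p : Polynomial ℤ} (hp : DensePos p) (j : ℕ) :
    0 ≤ p.coeff j := by
  rcases le_or_gt j p.natDegree with h | h
  · exact (hp j h).le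
  · simp [Polynomial.coeff_eq_zero_of_natDegree_lt h]

lemma densePos_one : DensePos 1 := by
  intro j hj
  simp only [Polynomial.natDegree_one, Nat.le_zero] at hj
  simp [hj]

lemma densePos_add {p q : Polynomial ℤ} (hp : DensePos p) (hq : DensePos q) :
    DensePos (p + q) ∧ (p + q).natDegree = max p.natDegree q.natDegree := by
  have key : ∀ j ≤ max p.natDegree q.natDegree, 0 < (p + q).coeff j := by
    intro j hj
    rw [Polynomial.coeff_add]
    rcases le_or_gt j p.natDegree with h | h
    · exact add_pos_of_pos_of_nonneg (hp j h) (hq.coeff_nonneg j)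
    · have hjq : j ≤ q.natDegree := by omega
      exact add_pos_of_nonneg_of_pos (hp.coeff_nonneg j) (hq j hjq)
  have hdeg : (p + q).natDegree = max p.natDegree q.natDegree := by
    refine le_antisymm (Polynomial.natDegree_add_le _ _) ?_
    exact Polynomial.le_natDegree_of_ne_zero (key _ le_rfl).ne'
  exact ⟨fun j hj => key j (hdeg ▸ hj), hdeg⟩

lemma densePos_mul {p q : Polynomial ℤ} (hp : DensePos p) (hq : DensePos q) :
    DensePos (p * q) ∧ (p * q).natDegree = p.natDegree + q.natDegree := by
  have hdeg : (p * q).natDegree = p.natDegree + q.natDegree :=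
    Polynomial.natDegree_mul hp.ne_zero hq.ne_zero
  refine ⟨?_, hdeg⟩
  intro j hj
  rw [hdeg] at hj
  rw [Polynomial.coeff_mul]
  apply Finset.sum_pos'
  · intro x _
    exact mul_nonneg (hp.coeff_nonneg _) (hq.coeff_nonneg _)
  · refine ⟨(min j p.natDegree, j - min j p.natDegree), ?_, ?_⟩
    · rw [Finset.HasAntidiagonal.mem_antidiagonal]
      omega
    · have h1 : 0 < p.coeff (min j p.natDegree) := hp _ (min_le_right _ _)
      have h2 : 0 < q.coeff (j - min j p.natDegree) := hq _ (by omega)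
      exact mul_pos h1 h2

lemma densePos_shift_add {p q : Polynomial ℤ} (s : ℕ) (hp : DensePos p) (hq : DensePos q)
    (hs : s ≤ p.natDegree + 1) :
    DensePos (p + X ^ s * q) ∧
      (p + X ^ s * q).natDegree = max p.natDegree (s + q.natDegree) := by
  have hc : ∀ j, (X ^ s * q).coeff j = if s ≤ j then q.coeff (j - s) else 0 := by
    intro j
    rw [mul_comm, Polynomial.coeff_mul_X_pow']
  have hnn : ∀ j, 0 ≤ (X ^ s * q).coeff j := by
    intro j; rw [hc]; split
    · exact hq.coeff_nonneg _
    · exact le_refl 0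
  have hdXq : (X ^ s * q).natDegree = s + q.natDegree := by
    rw [Polynomial.natDegree_mul (pow_ne_zero s Polynomial.X_ne_zero) hq.ne_zero, Polynomial.natDegree_X_pow]
  have key : ∀ j ≤ max p.natDegree (s + q.natDegree), 0 < (p + X ^ s * q).coeff j := by
    intro j hj
    rw [Polynomial.coeff_add]
    rcases le_or_gt j p.natDegree with h | h
    · exact add_pos_of_pos_of_nonneg (hp j h) (hnn j)
    · refine add_pos_of_nonneg_of_pos (hp.coeff_nonneg j) ?_
      rw [hc]
      have hsj : s ≤ j := by omega
      rw [if_pos hsj]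
      exact hq _ (by omega)
  have hdeg : (p + X ^ s * q).natDegree = max p.natDegree (s + q.natDegree) := by
    refine le_antisymm ?_ (Polynomial.le_natDegree_of_ne_zero (key _ le_rfl).ne')
    calc (p + X ^ s * q).natDegree ≤ max p.natDegree (X ^ s * q).natDegree :=
        Polynomial.natDegree_add_le _ _
      _ = _ := by rw [hdXq]
  exact ⟨fun j hj => key j (hdeg ▸ hj), hdeg⟩

lemma densePos_sum {ι : Type*} (s : Finset ι) (hs : s.Nonempty) (f : ι → Polynomial ℤ)
    (h : ∀ i ∈ s, DensePos (f i)) :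
    DensePos (∑ i ∈ s, f i) ∧
      (∑ i ∈ s, f i).natDegree = s.sup fun i => (f i).natDegree := by
  induction s using Finset.cons_induction with
  | empty => exact absurd hs (by simp)
  | cons a s ha ih =>
    rcases s.eq_empty_or_nonempty with rfl | hs'
    · simpa using h a (by simp)
    · have hA : DensePos (f a) := h a (Finset.mem_cons_self a s)
      obtain ⟨h1, h2⟩ := ih hs' (fun i hi => h i (Finset.mem_cons_of_mem hi))
      rw [Finset.sum_cons]
      obtain ⟨h3, h4⟩ := densePos_add hA h1
      refine ⟨h3, ?_⟩
      rw [h4, h2, Finset.sup_cons]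

lemma gaussBinom_eq_zero : ∀ n k : ℕ, n < k → gaussBinom n k = 0 := by
  intro n
  induction n with
  | zero =>
    intro k hk
    match k, hk with
    | m + 1, _ => rw [gaussBinom]
  | succ n ih =>
    intro k hk
    match k, hk with
    | m + 1, hk =>
      rw [gaussBinom, ih m (by omega), ih (m + 1) (by omega)]
      simp

lemma gaussBinom_dense : ∀ n k : ℕ, k ≤ n →
    DensePos (gaussBinom n k) ∧ (gaussBinom n k).natDegree = k * (n - k) := by
  intro n
  induction n with
  | zero =>
    intro k hk
    interval_cases k
    rw [gaussBinom]
    exact ⟨densePos_one, by simp⟩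
  | succ n ih =>
    intro k hk
    match k with
    | 0 =>
      rw [gaussBinom]
      exact ⟨densePos_one, by simp⟩
    | k + 1 =>
      rw [gaussBinom]
      obtain ⟨hp, hpd⟩ := ih k (by omega)
      rcases Nat.lt_or_ge k n with hkn | hkn
      · -- k + 1 ≤ n
        obtain ⟨hq, hqd⟩ := ih (k + 1) hkn
        obtain ⟨h1, h2⟩ := densePos_shift_add (k + 1) hp hq
          (by rw [hpd]; have : k * 1 ≤ k * (n - k) := Nat.mul_le_mul_left k (by omega); omega)
        refine ⟨h1, ?_⟩
        rw [h2, hpd, hqd]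
        have e1 : n - k = (n - (k + 1)) + 1 := by omega
        have e2 : n + 1 - (k + 1) = (n - (k + 1)) + 1 := by omega
        rw [e1, e2]
        set d := n - (k + 1)
        have e3 : k + 1 + (k + 1) * d = (k + 1) * (d + 1) := by ring
        rw [e3]
        exact Nat.max_eq_right (Nat.mul_le_mul_right _ (by omega))
      · -- k = n
        have hk' : k = n := by omega
        subst hk'
        rw [gaussBinom_eq_zero k (k + 1) (by omega)]
        simp only [mul_zero, add_zero]
        refine ⟨hp, ?_⟩
        rw [hpd]
        simp

lemma sup_reindex (n : ℕ) :
    (Finset.range (n + 1)).sup (fun k => k * (n - k) + g k) =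
      (Finset.range (n + 1)).sup (fun j => j * (n - j) + g (n - j)) := by
  apply le_antisymm
  · apply Finset.sup_le
    intro k hk
    rw [Finset.mem_range] at hk
    have h1 : n - k ∈ Finset.range (n + 1) := Finset.mem_range.mpr (by omega)
    have h2 := Finset.le_sup (f := fun j => j * (n - j) + g (n - j)) h1
    have h3 : n - (n - k) = k := by omega
    rw [h3] at h2
    calc k * (n - k) + g k = (n - k) * k + g k := by ring_nf
      _ ≤ _ := h2
  · apply Finset.sup_le
    intro j hj
    rw [Finset.mem_range] at hj
    have h1 : n - j ∈ Finset.range (n + 1) := Finset.mem_range.mpr (by omega)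
    have h2 := Finset.le_sup (f := fun k => k * (n - k) + g k) h1
    have h3 : n - (n - j) = j := by omega
    rw [h3] at h2
    calc j * (n - j) + g (n - j) = (n - j) * j + g (n - j) := by ring_nf
      _ ≤ _ := h2

lemma qBell_dense (n : ℕ) : DensePos (qBell n) ∧ (qBell n).natDegree = g n := by
  induction n using Nat.strong_induction_on with
  | _ n ih =>
    match n with
    | 0 =>
      rw [qBell, g]
      exact ⟨densePos_one, by simp⟩
    | n + 1 =>
      rw [qBell]
      have hterm : ∀ k : {x // x ∈ Finset.range (n + 1)},
          DensePos (gaussBinom n k.1 * qBell k.1) ∧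
            (gaussBinom n k.1 * qBell k.1).natDegree = k.1 * (n - k.1) + g k.1 := by
        intro k
        have hk : k.1 < n + 1 := Finset.mem_range.mp k.2
        obtain ⟨h1, h2⟩ := gaussBinom_dense n k.1 (by omega)
        obtain ⟨h3, h4⟩ := ih k.1 (by omega)
        obtain ⟨h5, h6⟩ := densePos_mul h1 h3
        exact ⟨h5, by rw [h6, h2, h4]⟩
      obtain ⟨h1, h2⟩ := densePos_sum (Finset.range (n + 1)).attach
        (Finset.attach_nonempty_iff.mpr (Finset.nonempty_range_iff.mpr (by omega)))
        (fun k => gaussBinom n k.1 * qBell k.1) (fun k _ => (hterm k).1)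
      refine ⟨h1, ?_⟩
      rw [h2]
      have : ((Finset.range (n + 1)).attach.sup fun k =>
          (gaussBinom n k.1 * qBell k.1).natDegree) =
          (Finset.range (n + 1)).attach.sup fun k => k.1 * (n - k.1) + g k.1 := by
        apply Finset.sup_congr rfl
        intro k _
        exact (hterm k).2
      rw [this, show ((Finset.range (n + 1)).attach.sup fun k => k.1 * (n - k.1) + g k.1) =
          (Finset.range (n + 1)).sup (fun k => k * (n - k) + g k) from
          Finset.sup_attach (Finset.range (n + 1)) (fun k => k * (n - k) + g k), sup_reindex, g]

theorem stmt11 (n : ℕ) :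
    (∀ j ≤ (qBell n).natDegree, 0 < (qBell n).coeff j) ∧
    (qBell n).support.card = g n + 1 := by
  obtain ⟨h1, h2⟩ := qBell_dense n
  refine ⟨h1, ?_⟩
  have : (qBell n).support = Finset.range ((qBell n).natDegree + 1) := by
    ext j
    rw [Polynomial.mem_support_iff, Finset.mem_range]
    constructor
    · intro hj
      by_contra hc
      exact hj (Polynomial.coeff_eq_zero_of_natDegree_lt (by omega))
    · intro hj
      exact (h1 j (by omega)).ne'
  rw [this, Finset.card_range, h2]
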